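/- arXiv:2407.18056 — 2 statements merged into one kernel-verified Lean document; each statement's English description precedes it below -/
import Mathlib

section
/- Let g > 0 and h_min : ℝ² → ℝ be a continuously differentiable terrain function. Suppose at a point y we have V(y) = h_min(y), V is differentiable at y, and ‖∇h_min(y)‖ > 1/g. Then the ansatz ∇V(y) = ∇h_min(y) satisfies the constrained HJB equation max_{â ∈ S¹} (∇V(y) · â) / max(1/g, ∇h_min(y) · â) = 1, with the maximum attained at â = ∇h_min(y)/‖∇h_min(y)‖. -/
open RealInnerProductSpace

theorem div_max_le_one {c : ℝ} (hc : 0 < c) (x : ℝ) : x / max c x ≤ 1 :=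
  div_le_one_of_le₀ (le_max_right c x) (hc.le.trans (le_max_left c x))

theorem div_max_eq_one {c x : ℝ} (hc : 0 < c) (hcx : c ≤ x) : x / max c x = 1 := by
  rw [max_eq_right hcx, div_self (hc.trans_le hcx).ne']

theorem real_inner_inv_norm_smul_self {E : Type*} [NormedAddCommGroup E] [InnerProductSpace ℝ E]
    (p : E) : ⟪p, ‖p‖⁻¹ • p⟫ = ‖p‖ := by
  rw [real_inner_smul_right, real_inner_self_eq_norm_mul_norm, ← div_eq_inv_mul,
    mul_self_div_self]

theorem stmt_5_general (g : ℝ) (hg : 0 < g)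
    (hmin V : EuclideanSpace ℝ (Fin 2) → ℝ)
    (y : EuclideanSpace ℝ (Fin 2))
    (hsteep : ‖gradient hmin y‖ > 1 / g)
    (hansatz : gradient V y = gradient hmin y) :
    (∀ a : EuclideanSpace ℝ (Fin 2), ‖a‖ = 1 →
      ⟪gradient V y, a⟫ / max (1 / g) ⟪gradient hmin y, a⟫ ≤ 1) ∧
    ⟪gradient V y, ‖gradient hmin y‖⁻¹ • gradient hmin y⟫ /
      max (1 / g) ⟪gradient hmin y, ‖gradient hmin y‖⁻¹ • gradient hmin y⟫ = 1 := by
  have hglide : 0 < 1 / g := by positivity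
  rw [hansatz, real_inner_inv_norm_smul_self]
  exact ⟨fun a _ ↦ div_max_le_one hglide _, div_max_eq_one hglide hsteep.le⟩

/-- Obstacle-interaction case of the MRAP HJB equation: if at `y` the value `V`
touches the terrain `h_min`, the terrain is steeper than the glide slope
(`‖∇h_min(y)‖ > 1/g`), and `∇V(y) = ∇h_min(y)`, then
`max over unit a of (∇V(y)·a)/max(1/g, ∇h_min(y)·a)` equals `1`, attained at
`a = ∇h_min(y)/‖∇h_min(y)‖`. -/
theorem stmt_5 (g : ℝ) (hg : 0 < g)
    (hmin V : EuclideanSpace ℝ (Fin 2) → ℝ)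
    (hsmooth : ContDiff ℝ 1 hmin)
    (y : EuclideanSpace ℝ (Fin 2))
    (htouch : V y = hmin y)
    (hdiff : DifferentiableAt ℝ V y)
    (hsteep : ‖gradient hmin y‖ > 1 / g)
    (hansatz : gradient V y = gradient hmin y) :
    (∀ a : EuclideanSpace ℝ (Fin 2), ‖a‖ = 1 →
      ⟪gradient V y, a⟫ / max (1 / g) ⟪gradient hmin y, a⟫ ≤ 1) ∧
    ⟪gradient V y, ‖gradient hmin y‖⁻¹ • gradient hmin y⟫ /
      max (1 / g) ⟪gradient hmin y, ‖gradient hmin y‖⁻¹ • gradient hmin y⟫ = 1 :=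
  stmt_5_general g hg hmin V y hsteep hansatz
end

section
/- With g(â) = W·â + √(1 - ‖W‖² + (W·â)²) for a fixed wind W with ‖W‖ < 1, the function U(y) = ‖y - x₀‖ / g((y - x₀)/‖y - x₀‖) satisfies: the sub-level set {y : U(y) ≤ h} is the closed ball of radius h centered at x₀ + hW. Equivalently, U(y) ≤ h iff ‖y - x₀ - hW‖ ≤ h. -/
open RealInnerProductSpace

private lemma key_arith (w r a s h : ℝ) (hw : w < 1) (hh : 0 ≤ h) (hr : 0 < r)
    (hs0 : 0 ≤ s) (hssq : s^2 = 1 - w^2 + a^2) (haw : |a| ≤ w) :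
    r ≤ h * (a + s) ↔ r^2 - 2*(h*(a*r)) + h^2*w^2 ≤ h^2 := by
  have hw0 : 0 ≤ w := le_trans (abs_nonneg a) haw
  constructor
  · intro hle
    rcases le_or_gt r (h*a) with hca | hca
    · have hha : 0 < h * a := lt_of_lt_of_le hr hca
      nlinarith [mul_le_mul_of_nonneg_right hca hr.le,
        mul_nonneg (sq_nonneg h) (show (0:ℝ) ≤ 1 - w^2 by nlinarith), mul_pos hr hr]
    · have h1 : r - h*a ≤ h*s := by nlinarith
      nlinarith [sq_nonneg (r - h*a)]
  · intro hle
    rcases le_or_gt r (h*a) with hca | hca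
    · nlinarith [mul_nonneg hh hs0]
    · have h1 : (r - h*a)^2 ≤ (h*s)^2 := by nlinarith
      have h2 : r - h*a ≤ h*s := by nlinarith [mul_nonneg hh hs0]
      nlinarith

/-- With uniform wind `W`, `‖W‖ < 1`, unit airspeed and unit sink rate, the
sub-level set `{y : U(y) ≤ h}` of the minimal altitude loss
`U(y) = ‖y - x₀‖ / g((y - x₀)/‖y - x₀‖)` is the closed ball of radius `h`
centered at the wind-drifted point `x₀ + h•W`. -/
theorem stmt_13 (W : EuclideanSpace ℝ (Fin 2)) (hW : ‖W‖ < 1)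
    (x₀ : EuclideanSpace ℝ (Fin 2))
    (g : EuclideanSpace ℝ (Fin 2) → ℝ)
    (hgdef : ∀ a, g a = ⟪W, a⟫ + Real.sqrt (1 - ‖W‖ ^ 2 + ⟪W, a⟫ ^ 2))
    (U : EuclideanSpace ℝ (Fin 2) → ℝ)
    (hU : ∀ y, U y = ‖y - x₀‖ / g (‖y - x₀‖⁻¹ • (y - x₀))) :
    ∀ h : ℝ, 0 ≤ h → ∀ y, U y ≤ h ↔ ‖y - x₀ - h • W‖ ≤ h := by
  intro h hh y
  set v : EuclideanSpace ℝ (Fin 2) := y - x₀ with hv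
  have hw0 : (0:ℝ) ≤ ‖W‖ := norm_nonneg _
  have hw2 : 0 < 1 - ‖W‖^2 := by nlinarith
  set r := ‖v‖ with hrdef
  have hr0 : 0 ≤ r := norm_nonneg _
  set p : ℝ := ⟪W, v⟫ with hpdef
  -- norm squared of v - h • W
  have hnorm : ‖y - x₀ - h • W‖^2 = r^2 - 2*(h*p) + h^2*‖W‖^2 := by
    have h1 : y - x₀ - h • W = v - h • W := by rw [hv]
    rw [h1, @norm_sub_sq_real (EuclideanSpace ℝ (Fin 2)) _ _ v (h • W)]
    rw [real_inner_smul_right, norm_smul, real_inner_comm]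
    rw [Real.norm_eq_abs, abs_of_nonneg hh]
    ring
  have hnn : 0 ≤ ‖y - x₀ - h • W‖ := norm_nonneg _
  have hrhs : ‖y - x₀ - h • W‖ ≤ h ↔ r^2 - 2*(h*p) + h^2*‖W‖^2 ≤ h^2 := by
    rw [← hnorm]
    constructor
    · intro hle; nlinarith
    · intro hle; nlinarith [sq_nonneg (‖y - x₀ - h • W‖ - h)]
  rw [hrhs, hU]
  rcases eq_or_lt_of_le hr0 with hr | hr
  · -- r = 0
    have hv0 : v = 0 := norm_eq_zero.mp hr.symm
    have hp0 : p = 0 := by rw [hpdef, hv0, inner_zero_right]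
    have : ‖y - x₀‖ = 0 := by rw [← hv]; exact hr.symm
    rw [this]
    simp only [zero_div]
    constructor
    · intro _; rw [hp0]; nlinarith
    · intro _; exact hh
  · -- r > 0
    have hrr : ‖y - x₀‖ = r := by rw [← hv]
    rw [hrr]
    set a : ℝ := r⁻¹ * p with hadef
    have hinner : (⟪W, (r⁻¹ • v)⟫ : ℝ) = a := by
      rw [real_inner_smul_right, hadef, hpdef]
    set s : ℝ := Real.sqrt (1 - ‖W‖^2 + a^2) with hsdef
    have hgval : g (r⁻¹ • v) = a + s := by
      rw [hgdef, hinner, hsdef]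
    have hs0 : 0 ≤ s := Real.sqrt_nonneg _
    have hssq : s^2 = 1 - ‖W‖^2 + a^2 := by
      rw [hsdef]; exact Real.sq_sqrt (by nlinarith)
    have haw : |a| ≤ ‖W‖ := by
      have hc : |p| ≤ ‖W‖ * r := by
        rw [hpdef, hrdef]; exact abs_real_inner_le_norm W v
      rw [hadef, abs_mul, abs_inv, abs_of_pos hr]
      rw [inv_mul_le_iff₀ hr]
      linarith [hc]
    have hsgt : |a| < s := by
      have : a^2 < s^2 := by rw [hssq]; nlinarith
      nlinarith [abs_nonneg a, sq_abs a]
    have hg0 : 0 < a + s := by linarith [neg_abs_le a, hsgt]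
    rw [hgval, div_le_iff₀ hg0]
    have hpa : p = a * r := by rw [hadef]; field_simp
    rw [hpa]
    exact key_arith ‖W‖ r a s h hW hh hr hs0 hssq haw
end
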